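/- Suppose p ≡ 3 or 7 (mod 8) (equivalently p ≡ 3 (mod 4)). Then the coefficients c_n of f_a^{(p−1)/2} satisfy: c_{p−1} = c_{p−3} = c_{2p−2} = c_{2p−4} = c_{3p−1} = c_{3p−3} = c_{4p−2} = c_{4p−4} = 0, and c_{3p−2} = −c_{2p−3}, c_{3p−4} = −c_{2p−1}, c_{4p−1} = −c_{p−4}, c_{4p−3} = −c_{p−2}. In other words, the Cartier–Manin matrix of H_a equals the matrix with rows (0, c_{p−2}, 0, c_{p−4}), (c_{2p−1}, 0, c_{2p−3}, 0), (0, −c_{2p−3}, 0, −c_{2p−1}), (−c_{p−4}, 0, −c_{p−2}, 0). -/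
import Mathlib


open Polynomial

/-- The polynomial `f_a = X (X⁴ − 1)(X⁴ + a X² + 1)` over a field `k`. -/
noncomputable def f {k : Type*} [Field k] (a : k) : k[X] :=
  X * (X ^ 4 - 1) * (X ^ 4 + C a * X ^ 2 + 1)

/-- `c p a n` is the coefficient of `Xⁿ` in `f_a ^ ((p−1)/2)`. -/
noncomputable def c {k : Type*} [Field k] (p : ℕ) (a : k) (n : ℕ) : k :=
  ((f a) ^ ((p - 1) / 2)).coeff n

/-- The Cartier–Manin matrix of `H_a : y² = f_a(x)`, the 4×4 matrix `(c_{ip−j})_{1 ≤ i,j ≤ 4}`. -/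
noncomputable def CartierManin {k : Type*} [Field k] (p : ℕ) (a : k) :
    Matrix (Fin 4) (Fin 4) k :=
  Matrix.of fun i j : Fin 4 => c p a ((i.1 + 1) * p - (j.1 + 1))

lemma f_expand {k : Type*} [Field k] (a : k) :
    f a = X ^ 9 + C a * X ^ 7 - C a * X ^ 3 - X := by
  unfold f; ring

lemma coeff_comp_neg_X {k : Type*} [Field k] (P : k[X]) (n : ℕ) :
    (P.comp (-X)).coeff n = (-1) ^ n * P.coeff n := by
  induction P using Polynomial.induction_on' with
  | add p q hp hq => simp [add_comp, hp, hq, mul_add]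
  | monomial e t =>
    rw [monomial_comp, neg_pow, ← C_1, ← C_neg, ← C_pow]
    simp only [coeff_C_mul, coeff_X_pow, coeff_monomial]
    by_cases h : n = e <;> simp [h, eq_comm, mul_comm]

lemma f_comp_neg {k : Type*} [Field k] (a : k) : (f a).comp (-X) = -(f a) := by
  unfold f
  simp only [mul_comp, sub_comp, add_comp, X_comp, pow_comp, one_comp, C_comp]
  ring

lemma natDegree_f_le {k : Type*} [Field k] (a : k) : (f a).natDegree ≤ 10 := by
  rw [f_expand]; compute_degree <;> norm_num

lemma reflect_neg' {k : Type*} [Field k] (P : k[X]) (N : ℕ) :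
    reflect N (-P) = -reflect N P := by
  ext i; simp [coeff_reflect]

lemma reflect_f {k : Type*} [Field k] (a : k) : reflect 10 (f a) = -(f a) := by
  have h1 : revAt 10 9 = 1 := by rw [revAt_le] <;> norm_num
  have h3 : revAt 10 7 = 3 := by rw [revAt_le] <;> norm_num
  have h7 : revAt 10 3 = 7 := by rw [revAt_le] <;> norm_num
  have h9 : revAt 10 1 = 9 := by rw [revAt_le] <;> norm_num
  rw [f_expand, show (X : k[X]) ^ 9 + C a * X ^ 7 - C a * X ^ 3 - X
      = X ^ 9 + C a * X ^ 7 + (-(C a) * X ^ 3 + (-1 : k[X]) * X ^ 1) by ring,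
    reflect_add, reflect_add, reflect_add, reflect_C_mul,
    show (-(C a) : k[X]) = C (-a) by simp,
    show (-1 : k[X]) = C (-1) by simp, reflect_C_mul, reflect_C_mul,
    reflect_monomial, reflect_monomial, reflect_monomial, reflect_monomial,
    h1, h3, h7, h9]
  simp only [map_neg, map_one]
  ring

lemma reflect_f_pow {k : Type*} [Field k] (a : k) (m : ℕ) :
    reflect (10 * m) ((f a) ^ m) = (-1) ^ m * (f a) ^ m := by
  induction m with
  | zero => simp [reflect_one]
  | succ n ih =>
    have hdn : ((f a) ^ n).natDegree ≤ 10 * n :=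
      natDegree_pow_le_of_le n (natDegree_f_le a) |>.trans (by omega)
    rw [pow_succ, show 10 * (n + 1) = 10 * n + 10 by ring,
      reflect_mul _ _ hdn (natDegree_f_le a), ih, reflect_f]
    ring

lemma c_even_zero {k : Type*} [Field k] (p : ℕ) [CharP k p] (hp : p.Prime) (hp7 : 7 ≤ p)
    (a : k) (hodd : Odd ((p - 1) / 2)) {n : ℕ} (hn : Even n) : c p a n = 0 := by
  have h := coeff_comp_neg_X ((f a) ^ ((p - 1) / 2)) n
  rw [pow_comp, f_comp_neg, hodd.neg_pow, hn.neg_one_pow, one_mul, coeff_neg] at h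
  have h2 : (2 : k) * c p a n = 0 := by
    unfold c; rw [two_mul]; nth_rewrite 1 [← h]; ring
  rcases mul_eq_zero.mp h2 with h3 | h3
  · exfalso
    have hc : ((2 : ℕ) : k) = 0 := by exact_mod_cast h3
    have hd := (CharP.cast_eq_zero_iff k p 2).mp hc
    have := Nat.le_of_dvd (by norm_num) hd
    omega
  · exact h3

lemma c_rev {k : Type*} [Field k] (p : ℕ) [CharP k p] (a : k)
    (hodd : Odd ((p - 1) / 2)) (hp2 : p % 2 = 1) {n : ℕ} (hn : n ≤ 5 * p - 5) :
    c p a (5 * p - 5 - n) = -c p a n := by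
  have h5 : 10 * ((p - 1) / 2) = 5 * p - 5 := by omega
  have h := reflect_f_pow a ((p - 1) / 2)
  rw [hodd.neg_one_pow, h5, neg_one_mul] at h
  have h2 := congrArg (fun q => q.coeff n) h
  simp only [coeff_reflect, coeff_neg, revAt_le hn] at h2
  exact h2

theorem stmt_18 (p : ℕ) (hp : p.Prime) (hp7 : 7 ≤ p)
    (hmod : p % 8 = 3 ∨ p % 8 = 7)
    (k : Type*) [Field k] [CharP k p] (a : k) :
    (c p a (p - 1) = 0 ∧ c p a (p - 3) = 0 ∧
     c p a (2 * p - 2) = 0 ∧ c p a (2 * p - 4) = 0 ∧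
     c p a (3 * p - 1) = 0 ∧ c p a (3 * p - 3) = 0 ∧
     c p a (4 * p - 2) = 0 ∧ c p a (4 * p - 4) = 0 ∧
     c p a (3 * p - 2) = -c p a (2 * p - 3) ∧ c p a (3 * p - 4) = -c p a (2 * p - 1) ∧
     c p a (4 * p - 1) = -c p a (p - 4) ∧ c p a (4 * p - 3) = -c p a (p - 2)) ∧
    CartierManin p a =
      !![0, c p a (p - 2), 0, c p a (p - 4);
         c p a (2 * p - 1), 0, c p a (2 * p - 3), 0;
         0, -c p a (2 * p - 3), 0, -c p a (2 * p - 1);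
         -c p a (p - 4), 0, -c p a (p - 2), 0] := by
  have hp2 : p % 2 = 1 := by omega
  have hodd : Odd ((p - 1) / 2) := by rw [Nat.odd_iff]; omega
  have ev : ∀ n : ℕ, n % 2 = 0 → c p a n = 0 := fun n hn =>
    c_even_zero p hp hp7 a hodd (Nat.even_iff.mpr hn)
  have h1 := ev (p - 1) (by omega)
  have h2 := ev (p - 3) (by omega)
  have h3 := ev (2 * p - 2) (by omega)
  have h4 := ev (2 * p - 4) (by omega)
  have h5 := ev (3 * p - 1) (by omega)
  have h6 := ev (3 * p - 3) (by omega)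
  have h7 := ev (4 * p - 2) (by omega)
  have h8 := ev (4 * p - 4) (by omega)
  have h9 : c p a (3 * p - 2) = -c p a (2 * p - 3) := by
    have h := c_rev p a hodd hp2 (n := 2 * p - 3) (by omega)
    rwa [show 5 * p - 5 - (2 * p - 3) = 3 * p - 2 by omega] at h
  have h10 : c p a (3 * p - 4) = -c p a (2 * p - 1) := by
    have h := c_rev p a hodd hp2 (n := 2 * p - 1) (by omega)
    rwa [show 5 * p - 5 - (2 * p - 1) = 3 * p - 4 by omega] at h
  have h11 : c p a (4 * p - 1) = -c p a (p - 4) := by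
    have h := c_rev p a hodd hp2 (n := p - 4) (by omega)
    rwa [show 5 * p - 5 - (p - 4) = 4 * p - 1 by omega] at h
  have h12 : c p a (4 * p - 3) = -c p a (p - 2) := by
    have h := c_rev p a hodd hp2 (n := p - 2) (by omega)
    rwa [show 5 * p - 5 - (p - 2) = 4 * p - 3 by omega] at h
  refine ⟨⟨h1, h2, h3, h4, h5, h6, h7, h8, h9, h10, h11, h12⟩, ?_⟩
  have v3 : ((3 : Fin 4) : ℕ) = 3 := rfl
  ext i j
  fin_cases i <;> fin_cases j <;>
    simp [CartierManin, v3, h1, h2, h3, h4, h5, h6, h7, h8, h9, h10, h11, h12]
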